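/- arXiv:2602.11822 — 3 statements merged into one kernel-verified Lean document; each statement's English description precedes it below -/
import Mathlib

section
/- (Theorem 1: positive spectrum of the directed grounded Laplacian.) Suppose Assumption 1 holds with partition V1 ∪ V2 of {1,…,N}. Let δ_1,…,δ_N ≥ 0 and let B_1,…,B_N ∈ ℝ^{d×d} be symmetric, each positive semidefinite or negative semidefinite, such that |B_i| is positive definite for every i ∈ V1. For i ∈ V1 set C_i = (1/2) λ_max[ |B_i|⁻¹ ( Σ_{j∈N'_i}|A_{ji}| − Σ_{j∈N_i}|A_{ij}| ) ] (all eigenvalues of this matrix are real, since it is similar via |B_i|^{1/2} to a symmetric matrix). If δ_i > C_i for every i ∈ V1, then every eigenvalue of the grounded Laplacian L_B = L + blockdiag(δ_1|B_1|,…,δ_N|B_N|), taken over ℂ, has strictly positive real part. -/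
/-!
Twice the real quadratic form of `L_B` splits into edge energies
`(x_i - s_ij x_j)ᵀ |A_ij| (x_i - s_ij x_j)`, with `s_ij = ±1` the sign of `A_ij`, plus vertex terms
`x_iᵀ (2 δ_i |B_i| - (Σ_j |A_ji| - Σ_j |A_ij|)) x_i`. All of them are nonnegative: on `V2` by
in-degree domination, on `V1` because the bound on `δ_i` makes the vertex matrix positive
definite. Hence a vector of zero energy vanishes on `V1`, and a vanishing edge energy on a
definite weight gives `x_{i_{s+1}} = ± x_{i_s}`, so it vanishes along every positive–negative path,
i.e. everywhere. Finally, for an eigenpair `(μ, a + i b)` of `L_B`,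
`aᵀ L_B a + bᵀ L_B b = Re μ (|a|² + |b|²)`.
-/

open Matrix Filter
open scoped Classical

/-- `|Q|` for a real symmetric matrix that is positive semidefinite or negative
semidefinite: it equals `Q` in the first case and `-Q` in the second. -/
noncomputable def absM {d : ℕ} (Q : Matrix (Fin d) (Fin d) ℝ) : Matrix (Fin d) (Fin d) ℝ :=
  if Q.PosSemidef then Q else -Q

/-- A signed matrix-weight assignment: for `i ≠ j`, each weight `A i j` is symmetric
and either positive semidefinite or negative semidefinite. -/
def SignedWeights {N d : ℕ} (A : Fin N → Fin N → Matrix (Fin d) (Fin d) ℝ) : Prop :=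
  ∀ i j : Fin N, i ≠ j → (A i j).IsSymm ∧ ((A i j).PosSemidef ∨ (-(A i j)).PosSemidef)

/-- The signed matrix-weighted Laplacian: `(i,j)` block `−A_{ij}` for `j ≠ i`, and
`(i,i)` block `Σ_{k≠i}|A_{ik}|`. -/
noncomputable def Lap {N d : ℕ} (A : Fin N → Fin N → Matrix (Fin d) (Fin d) ℝ) :
    Matrix (Fin N × Fin d) (Fin N × Fin d) ℝ :=
  fun p q =>
    if p.1 = q.1 then (∑ k ∈ Finset.univ.erase p.1, absM (A p.1 k)) p.2 q.2
    else (-(A p.1 q.1)) p.2 q.2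

/-- The block-diagonal `Nd × Nd` matrix with `d × d` diagonal blocks `D 1, …, D N`. -/
def blockDiag' {N d : ℕ} (D : Fin N → Matrix (Fin d) (Fin d) ℝ) :
    Matrix (Fin N × Fin d) (Fin N × Fin d) ℝ :=
  fun p q => if p.1 = q.1 then D p.1 p.2 q.2 else 0

/-- Matrix-weighted in-degree `Σ_{k∈N_i}|A_{ik}|` of vertex `i`
(weights `A i k = 0` contribute nothing). -/
noncomputable def inDeg {N d : ℕ} (A : Fin N → Fin N → Matrix (Fin d) (Fin d) ℝ)
    (i : Fin N) : Matrix (Fin d) (Fin d) ℝ :=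
  ∑ k ∈ Finset.univ.erase i, absM (A i k)

/-- Matrix-weighted out-degree `Σ_{k∈N'_i}|A_{ki}|` of vertex `i`. -/
noncomputable def outDeg {N d : ℕ} (A : Fin N → Fin N → Matrix (Fin d) (Fin d) ℝ)
    (i : Fin N) : Matrix (Fin d) (Fin d) ℝ :=
  ∑ k ∈ Finset.univ.erase i, absM (A k i)

/-- A positive–negative path from `i` to `j`: a sequence `i = p 0, …, p m = j` with
`m ≥ 1` in which every traversed weight `A_{p(s+1), p(s)}` is positive or negative
definite. -/
def PNPath {N d : ℕ} (A : Fin N → Fin N → Matrix (Fin d) (Fin d) ℝ) (i j : Fin N) : Prop :=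
  ∃ m : ℕ, 0 < m ∧ ∃ p : Fin (m + 1) → Fin N, p 0 = i ∧ p (Fin.last m) = j ∧
    ∀ s : Fin m, (A (p s.succ) (p s.castSucc)).PosDef ∨ (-(A (p s.succ) (p s.castSucc))).PosDef

/-- Vertex `j` is in-degree-dominated. -/
def InDegDom {N d : ℕ} (A : Fin N → Fin N → Matrix (Fin d) (Fin d) ℝ) (j : Fin N) : Prop :=
  (inDeg A j - outDeg A j).PosSemidef

/-- Assumption 1: `{1,…,N} = V1 ∪ V2` disjointly, every `j ∈ V2` is reached from some
`i ∈ V1` by a positive–negative path, and every `j ∈ V2` is in-degree-dominated. -/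
def Assumption1 {N d : ℕ} (A : Fin N → Fin N → Matrix (Fin d) (Fin d) ℝ)
    (V1 V2 : Finset (Fin N)) : Prop :=
  V1 ∪ V2 = Finset.univ ∧ V1 ∩ V2 = ∅ ∧
    (∀ j ∈ V2, ∃ i ∈ V1, PNPath A i j) ∧ (∀ j ∈ V2, InDegDom A j)

/-- `Ω_i`: the set of (other) vertices `j` with `A_{ij}` negative semidefinite and nonzero. -/
noncomputable def OmegaSet {N d : ℕ} (A : Fin N → Fin N → Matrix (Fin d) (Fin d) ℝ)
    (i : Fin N) : Finset (Fin N) :=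
  (Finset.univ.erase i).filter fun j => (-(A i j)).PosSemidef ∧ A i j ≠ 0

section Spectral

variable {n : Type*} [Fintype n] [DecidableEq n]

lemma isRoot_charpoly_iff_exists_mulVec_eq_smul {K : Type*} [Field K] (M : Matrix n n K) (μ : K) :
    M.charpoly.IsRoot μ ↔ ∃ v ≠ 0, M *ᵥ v = μ • v := by
  rw [Polynomial.IsRoot, eval_charpoly, ← exists_mulVec_eq_zero_iff]
  have hscalar : ∀ v : n → K, scalar n μ *ᵥ v = μ • v := fun v => by
    ext p; simp [mulVec_diagonal]
  simp only [sub_mulVec, hscalar, sub_eq_zero, eq_comm (a := μ • _)]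

lemma posDef_smul_one_sub_of_isRoot_charpoly_lt {S : Matrix n n ℝ} (hS : S.IsHermitian) {c : ℝ}
    (h : ∀ μ, S.charpoly.IsRoot μ → μ < c) : (c • 1 - S).PosDef := by
  have hK : (c • 1 - S).IsHermitian := (isHermitian_one.smul (.all c)).sub hS
  refine hK.posDef_iff_eigenvalues_pos.mpr fun k => ?_
  have hw := hK.mulVec_eigenvectorBasis k
  rw [sub_mulVec, smul_mulVec, one_mulVec, sub_eq_iff_eq_add, ← sub_eq_iff_eq_add',
    ← sub_smul] at hw
  have hw0 : ⇑(hK.eigenvectorBasis k) ≠ 0 := fun h0 =>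
    hK.eigenvectorBasis.orthonormal.ne_zero k (by simpa using congrArg (WithLp.toLp 2) h0)
  linarith [h _ ((isRoot_charpoly_iff_exists_mulVec_eq_smul S _).mpr ⟨_, hw0, hw.symm⟩)]

open scoped MatrixOrder in
lemma posDef_smul_sub_of_isRoot_charpoly_inv_mul_lt {P D : Matrix n n ℝ} (hP : P.PosDef)
    (hD : D.IsHermitian) {c : ℝ} (h : ∀ μ, (P⁻¹ * D).charpoly.IsRoot μ → μ < c) :
    (c • P - D).PosDef := by
  -- With `R = √P`, `P⁻¹ D` is similar to the symmetric `S = R⁻¹ D R⁻¹`,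
  -- and `c P - D = R (c - S) R`.
  set R := CFC.sqrt P
  have hRR : R * R = P := CFC.sqrt_mul_sqrt_self P hP.posSemidef.nonneg
  have hR : Rᴴ = R := (nonneg_iff_posSemidef.mp (CFC.sqrt_nonneg P)).isHermitian
  have hRu : IsUnit R := CFC.isUnit_sqrt_iff_isStrictlyPositive.mpr hP.isStrictlyPositive
  have hRinv : R * R⁻¹ = 1 := mul_nonsing_inv R ((isUnit_iff_isUnit_det R).mp hRu)
  have hinvR : R⁻¹ * R = 1 := nonsing_inv_mul R ((isUnit_iff_isUnit_det R).mp hRu)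
  set S := R⁻¹ * D * R⁻¹
  have hS : S.IsHermitian := by
    have h := isHermitian_mul_mul_conjTranspose R⁻¹ hD
    rwa [conjTranspose_nonsing_inv, hR] at h
  have hsim : P⁻¹ * D = hRu.unit.val⁻¹ * S * hRu.unit.val := by
    rw [IsUnit.unit_spec, ← hRR, Matrix.mul_inv_rev]
    simp only [S, Matrix.mul_assoc, hinvR, Matrix.mul_one]
  have hK := posDef_smul_one_sub_of_isRoot_charpoly_lt hS fun μ hμ =>
    h μ (by rwa [hsim, charpoly_units_conj'])
  have hkey : c • P - D = R * (c • 1 - S) * Rᴴ := by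
    rw [hR, ← hRR]
    simp only [S, Matrix.mul_sub, Matrix.sub_mul, Matrix.mul_smul, Matrix.smul_mul, Matrix.mul_one,
      ← Matrix.mul_assoc, hRinv, Matrix.one_mul]
    simp only [Matrix.mul_assoc, hinvR, Matrix.mul_one]
  rw [hkey]
  exact hK.mul_mul_conjTranspose_same (vecMul_injective_iff_isUnit.mpr hRu)

lemma re_pos_of_isRoot_charpoly_map_ofReal {M : Matrix n n ℝ}
    (hM : ∀ x ≠ 0, 0 < x ⬝ᵥ M *ᵥ x) {μ : ℂ} (hμ : (M.map Complex.ofReal).charpoly.IsRoot μ) :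
    0 < μ.re := by
  obtain ⟨v, hv, hvμ⟩ := (isRoot_charpoly_iff_exists_mulVec_eq_smul _ μ).mp hμ
  set a : n → ℝ := fun p => (v p).re
  set b : n → ℝ := fun p => (v p).im
  have hMa : M *ᵥ a = μ.re • a - μ.im • b := funext fun p => by
    simpa [mulVec, dotProduct, Complex.re_sum, a, b] using congrArg Complex.re (congrFun hvμ p)
  have hMb : M *ᵥ b = μ.re • b + μ.im • a := funext fun p => by
    simpa [mulVec, dotProduct, Complex.im_sum, a, b, add_comm] using
      congrArg Complex.im (congrFun hvμ p)
  have hsum : a ⬝ᵥ M *ᵥ a + b ⬝ᵥ M *ᵥ b = μ.re * (a ⬝ᵥ a + b ⬝ᵥ b) := by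
    rw [hMa, hMb]
    simp only [dotProduct_sub, dotProduct_add, dotProduct_smul, smul_eq_mul, dotProduct_comm b a]
    ring
  have hnonneg : ∀ x, 0 ≤ x ⬝ᵥ M *ᵥ x := fun x => by
    rcases eq_or_ne x 0 with rfl | hx
    · simp
    · exact (hM x hx).le
  have hab : a ≠ 0 ∨ b ≠ 0 := by
    by_contra! h
    exact hv (funext fun p => Complex.ext (congrFun h.1 p) (congrFun h.2 p))
  have hpos : 0 < a ⬝ᵥ M *ᵥ a + b ⬝ᵥ M *ᵥ b := by
    rcases hab with h | h
    · linarith [hM a h, hnonneg b]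
    · linarith [hM b h, hnonneg a]
  rw [hsum] at hpos
  have hself : ∀ x : n → ℝ, 0 ≤ x ⬝ᵥ x := fun x => Fintype.sum_nonneg fun _ => mul_self_nonneg _
  exact pos_of_mul_pos_left hpos (add_nonneg (hself a) (hself b))

end Spectral

section SignedMatrix

variable {d : ℕ}

noncomputable def signM (Q : Matrix (Fin d) (Fin d) ℝ) : ℝ :=
  if Q.PosSemidef then 1 else -1

lemma signM_mul_self (Q : Matrix (Fin d) (Fin d) ℝ) : signM Q * signM Q = 1 := by
  unfold signM; split_ifs <;> norm_num

lemma signM_smul_absM (Q : Matrix (Fin d) (Fin d) ℝ) : signM Q • absM Q = Q := by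
  unfold signM absM; split_ifs <;> simp

lemma absM_posSemidef {Q : Matrix (Fin d) (Fin d) ℝ} (h : Q.PosSemidef ∨ (-Q).PosSemidef) :
    (absM Q).PosSemidef := by
  unfold absM; split_ifs with hQ
  · exact hQ
  · exact h.resolve_left hQ

lemma absM_posDef {Q : Matrix (Fin d) (Fin d) ℝ} (h : Q.PosDef ∨ (-Q).PosDef) :
    (absM Q).PosDef := by
  unfold absM
  split_ifs with hQ
  · refine h.elim id fun hneg => .of_dotProduct_mulVec_pos hQ.isHermitian fun x hx => ?_
    have := hneg.dotProduct_mulVec_pos hx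
    rw [neg_mulVec, dotProduct_neg] at this
    linarith [hQ.dotProduct_mulVec_nonneg x]
  · exact h.resolve_left fun hpos => hQ hpos.posSemidef

lemma absM_isSymm {Q : Matrix (Fin d) (Fin d) ℝ} (hQ : Q.IsSymm) : (absM Q).IsSymm := by
  unfold absM; split_ifs
  · exact hQ
  · exact hQ.neg

lemma dotProduct_absM_mulVec_sub_signM {W : Matrix (Fin d) (Fin d) ℝ} (hW : W.IsSymm)
    (u w : Fin d → ℝ) :
    (u - signM W • w) ⬝ᵥ absM W *ᵥ (u - signM W • w)
      = u ⬝ᵥ absM W *ᵥ u + w ⬝ᵥ absM W *ᵥ w - 2 * (u ⬝ᵥ W *ᵥ w) := by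
  have hsymm : w ⬝ᵥ absM W *ᵥ u = u ⬝ᵥ absM W *ᵥ w := by
    rw [dotProduct_mulVec, ← mulVec_transpose, (absM_isSymm hW).eq, dotProduct_comm]
  have hsplit : u ⬝ᵥ W *ᵥ w = signM W * (u ⬝ᵥ absM W *ᵥ w) := by
    conv_lhs => rw [← signM_smul_absM W]
    rw [smul_mulVec, dotProduct_smul, smul_eq_mul]
  simp only [mulVec_sub, sub_dotProduct, dotProduct_sub, mulVec_smul, dotProduct_smul,
    smul_dotProduct, smul_eq_mul, hsymm, hsplit]
  linear_combination (w ⬝ᵥ absM W *ᵥ w) * signM_mul_self W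

end SignedMatrix

lemma uncurry_dotProduct_mulVec_uncurry {ι κ R : Type*} [Fintype ι] [Fintype κ] [CommSemiring R]
    (M : Matrix (ι × κ) (ι × κ) R) (X Y : ι → κ → R) :
    Function.uncurry X ⬝ᵥ M *ᵥ Function.uncurry Y
      = ∑ i, ∑ j, X i ⬝ᵥ (of fun s t => M (i, s) (j, t)) *ᵥ Y j := by
  simp only [dotProduct, mulVec, Fintype.sum_prod_type, Function.uncurry_apply_pair, of_apply,
    Finset.mul_sum]
  exact Finset.sum_congr rfl fun i _ => Finset.sum_comm

section GroundedLaplacian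

variable {N d : ℕ} (A : Fin N → Fin N → Matrix (Fin d) (Fin d) ℝ)

lemma block_lap_add_blockDiag' (D : Fin N → Matrix (Fin d) (Fin d) ℝ) (i j : Fin N) :
    (of fun s t => (Lap A + blockDiag' D) (i, s) (j, t))
      = if i = j then inDeg A i + D i else -A i j := by
  ext s t
  split_ifs with h
  · subst h; simp [Lap, _root_.blockDiag', inDeg]
  · simp [Lap, _root_.blockDiag', h]

lemma uncurry_dotProduct_lap_add_blockDiag'_mulVec (D : Fin N → Matrix (Fin d) (Fin d) ℝ)
    (X : Fin N → Fin d → ℝ) :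
    Function.uncurry X ⬝ᵥ (Lap A + blockDiag' D) *ᵥ Function.uncurry X
      = ∑ i, X i ⬝ᵥ (inDeg A i + D i) *ᵥ X i
        - ∑ i, ∑ j ∈ Finset.univ.erase i, X i ⬝ᵥ A i j *ᵥ X j := by
  rw [uncurry_dotProduct_mulVec_uncurry, ← Finset.sum_sub_distrib]
  refine Finset.sum_congr rfl fun i _ => ?_
  rw [← Finset.add_sum_erase _ _ (Finset.mem_univ i), block_lap_add_blockDiag', if_pos rfl,
    sub_eq_add_neg, ← Finset.sum_neg_distrib]
  congr 1
  refine Finset.sum_congr rfl fun j hj => ?_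
  rw [block_lap_add_blockDiag', if_neg (Finset.ne_of_mem_erase hj).symm, neg_mulVec,
    dotProduct_neg]

lemma two_mul_uncurry_dotProduct_lap_add_blockDiag'_mulVec
    (hA : ∀ i j, i ≠ j → (A i j).IsSymm) (D : Fin N → Matrix (Fin d) (Fin d) ℝ)
    (X : Fin N → Fin d → ℝ) :
    2 * (Function.uncurry X ⬝ᵥ (Lap A + blockDiag' D) *ᵥ Function.uncurry X)
      = ∑ i, ∑ j ∈ Finset.univ.erase i,
          (X i - signM (A i j) • X j) ⬝ᵥ absM (A i j) *ᵥ (X i - signM (A i j) • X j)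
        + ∑ i, X i ⬝ᵥ ((2 : ℝ) • D i - (outDeg A i - inDeg A i)) *ᵥ X i := by
  have hedge : ∀ i, ∀ j ∈ Finset.univ.erase i,
      (X i - signM (A i j) • X j) ⬝ᵥ absM (A i j) *ᵥ (X i - signM (A i j) • X j)
        = X i ⬝ᵥ absM (A i j) *ᵥ X i + X j ⬝ᵥ absM (A i j) *ᵥ X j
          - 2 * (X i ⬝ᵥ A i j *ᵥ X j) := fun i j hj =>
    dotProduct_absM_mulVec_sub_signM (hA i j (Finset.ne_of_mem_erase hj).symm) _ _
  have hin : ∀ i, ∑ j ∈ Finset.univ.erase i, X i ⬝ᵥ absM (A i j) *ᵥ X i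
      = X i ⬝ᵥ inDeg A i *ᵥ X i := fun i => by
    simp only [inDeg, sum_mulVec, dotProduct_sum]
  have hout : ∑ i, ∑ j ∈ Finset.univ.erase i, X j ⬝ᵥ absM (A i j) *ᵥ X j
      = ∑ j, X j ⬝ᵥ outDeg A j *ᵥ X j := by
    rw [Finset.sum_comm' (t' := Finset.univ) (s' := fun j => Finset.univ.erase j)
      (fun i j => by simp [ne_comm])]
    simp only [outDeg, sum_mulVec, dotProduct_sum]
  rw [uncurry_dotProduct_lap_add_blockDiag'_mulVec, Finset.sum_congr rfl fun i _ =>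
    Finset.sum_congr rfl (hedge i)]
  simp only [Finset.sum_sub_distrib, Finset.sum_add_distrib, ← Finset.mul_sum, hin, hout,
    add_mulVec, sub_mulVec, smul_mulVec, dotProduct_add, dotProduct_sub, dotProduct_smul,
    smul_eq_mul]
  ring

end GroundedLaplacian

lemma Matrix.PosDef.eq_zero_of_dotProduct_mulVec_self_eq_zero {n : Type*} [Fintype n]
    {M : Matrix n n ℝ} (hM : M.PosDef) {x : n → ℝ} (h : x ⬝ᵥ M *ᵥ x = 0) : x = 0 := by
  by_contra hx
  simpa [h] using hM.dotProduct_mulVec_pos hx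

section Positivity

variable {N d : ℕ} {A : Fin N → Fin N → Matrix (Fin d) (Fin d) ℝ} {X : Fin N → Fin d → ℝ}

lemma eq_zero_of_pnPath
    (hedge : ∀ i j, i ≠ j →
      (X i - signM (A i j) • X j) ⬝ᵥ absM (A i j) *ᵥ (X i - signM (A i j) • X j) = 0)
    {i j : Fin N} (hij : PNPath A i j) (hi : X i = 0) : X j = 0 := by
  obtain ⟨m, -, p, rfl, rfl, hp⟩ := hij
  suffices ∀ s, X (p s) = 0 from this (Fin.last m)
  intro s
  induction s using Fin.induction with
  | zero => exact hi
  | succ s ih =>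
    by_cases hs : p s.succ = p s.castSucc
    · rwa [hs]
    · have h0 := (absM_posDef (hp s)).eq_zero_of_dotProduct_mulVec_self_eq_zero (hedge _ _ hs)
      rw [sub_eq_zero.mp h0, ih, smul_zero]

lemma eq_zero_of_assumption1 {V1 V2 : Finset (Fin N)} (hAss : Assumption1 A V1 V2)
    (hV1 : ∀ i ∈ V1, X i = 0)
    (hedge : ∀ i j, i ≠ j →
      (X i - signM (A i j) • X j) ⬝ᵥ absM (A i j) *ᵥ (X i - signM (A i j) • X j) = 0) :
    X = 0 := by
  obtain ⟨hcover, -, hpath, -⟩ := hAss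
  funext j
  rcases Finset.mem_union.mp (hcover ▸ Finset.mem_univ j) with hj | hj
  · exact hV1 j hj
  · obtain ⟨i, hi, hij⟩ := hpath j hj
    exact eq_zero_of_pnPath hedge hij (hV1 i hi)

end Positivity

section Vertex

variable {N d : ℕ} {A : Fin N → Fin N → Matrix (Fin d) (Fin d) ℝ}

lemma inDeg_posSemidef (hA : SignedWeights A) (i : Fin N) : (inDeg A i).PosSemidef :=
  posSemidef_sum _ fun k hk => absM_posSemidef (hA i k (Finset.ne_of_mem_erase hk).symm).2

lemma outDeg_posSemidef (hA : SignedWeights A) (i : Fin N) : (outDeg A i).PosSemidef :=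
  posSemidef_sum _ fun k hk => absM_posSemidef (hA k i (Finset.ne_of_mem_erase hk)).2

lemma posDef_smul_sub_outDeg_sub_inDeg (hA : SignedWeights A) {i : Fin N} {δ : ℝ}
    {P : Matrix (Fin d) (Fin d) ℝ} (hP : P.PosDef)
    (hδ : ∀ μ : ℝ, ((P⁻¹ * (outDeg A i - inDeg A i)).charpoly).IsRoot μ → μ / 2 < δ) :
    ((2 * δ) • P - (outDeg A i - inDeg A i)).PosDef :=
  posDef_smul_sub_of_isRoot_charpoly_inv_mul_lt hP
    ((outDeg_posSemidef hA i).isHermitian.sub (inDeg_posSemidef hA i).isHermitian)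
    fun μ hμ => by linarith [hδ μ hμ]

lemma posSemidef_smul_sub_outDeg_sub_inDeg {i : Fin N} (hi : InDegDom A i) {δ : ℝ} (hδ : 0 ≤ δ)
    {P : Matrix (Fin d) (Fin d) ℝ} (hP : P.PosSemidef) :
    ((2 * δ) • P - (outDeg A i - inDeg A i)).PosSemidef := by
  rw [sub_sub_eq_add_sub, add_sub_assoc]
  exact (hP.smul (by linarith)).add hi

end Vertex

lemma dotProduct_lap_add_blockDiag'_mulVec_pos {N d : ℕ}
    {A : Fin N → Fin N → Matrix (Fin d) (Fin d) ℝ} (hA : SignedWeights A)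
    {V1 V2 : Finset (Fin N)} (hAss : Assumption1 A V1 V2)
    {δ : Fin N → ℝ} (hδ0 : ∀ i, 0 ≤ δ i) {B : Fin N → Matrix (Fin d) (Fin d) ℝ}
    (hBsd : ∀ i, (B i).PosSemidef ∨ (-(B i)).PosSemidef)
    (hBpd : ∀ i ∈ V1, (absM (B i)).PosDef)
    (hδC : ∀ i ∈ V1, ∀ μ : ℝ,
      (((absM (B i))⁻¹ * (outDeg A i - inDeg A i)).charpoly).IsRoot μ → μ / 2 < δ i)
    {x : Fin N × Fin d → ℝ} (hx : x ≠ 0) :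
    0 < x ⬝ᵥ (Lap A + blockDiag' fun i => δ i • absM (B i)) *ᵥ x := by
  have hcover : V1 ∪ V2 = Finset.univ := hAss.1
  have hdom : ∀ j ∈ V2, InDegDom A j := hAss.2.2.2
  set X := Function.curry x
  set H := fun i => (2 * δ i) • absM (B i) - (outDeg A i - inDeg A i)
  set E := fun i j =>
    (X i - signM (A i j) • X j) ⬝ᵥ absM (A i j) *ᵥ (X i - signM (A i j) • X j)
  have hH1 : ∀ i ∈ V1, (H i).PosDef := fun i hi =>
    posDef_smul_sub_outDeg_sub_inDeg hA (hBpd i hi) (hδC i hi)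
  have hH : ∀ i, 0 ≤ X i ⬝ᵥ H i *ᵥ X i := fun i => by
    have hpsd : (H i).PosSemidef := by
      rcases Finset.mem_union.mp (hcover ▸ Finset.mem_univ i) with hi | hi
      · exact (hH1 i hi).posSemidef
      · exact posSemidef_smul_sub_outDeg_sub_inDeg (hdom i hi) (hδ0 i) (absM_posSemidef (hBsd i))
    simpa only [star_trivial] using hpsd.dotProduct_mulVec_nonneg (X i)
  have hE : ∀ i, ∀ j ∈ Finset.univ.erase i, 0 ≤ E i j := fun i j hj => by
    simpa only [star_trivial] using
      (absM_posSemidef (hA i j (Finset.ne_of_mem_erase hj).symm).2).dotProduct_mulVec_nonneg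
        (X i - signM (A i j) • X j)
  have hid := two_mul_uncurry_dotProduct_lap_add_blockDiag'_mulVec A
    (fun i j hij => (hA i j hij).1) (fun i => δ i • absM (B i)) X
  simp only [smul_smul, show Function.uncurry X = x from Function.uncurry_curry x] at hid
  change 2 * _ = ∑ i, ∑ j ∈ _, E i j + ∑ i, X i ⬝ᵥ H i *ᵥ X i at hid
  by_contra! hle
  have hEsum : 0 ≤ ∑ i, ∑ j ∈ Finset.univ.erase i, E i j :=
    Finset.sum_nonneg fun i _ => Finset.sum_nonneg (hE i)
  have hHsum : 0 ≤ ∑ i, X i ⬝ᵥ H i *ᵥ X i := Finset.sum_nonneg fun i _ => hH i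
  have hE0 : ∀ i j, i ≠ j → E i j = 0 := fun i j hij =>
    (Finset.sum_eq_zero_iff_of_nonneg (hE i)).mp
      ((Finset.sum_eq_zero_iff_of_nonneg fun i _ => Finset.sum_nonneg (hE i)).mp
        (by linarith) i (Finset.mem_univ i)) j (Finset.mem_erase.mpr ⟨hij.symm, Finset.mem_univ j⟩)
  have hH0 : ∀ i ∈ V1, X i = 0 := fun i hi =>
    (hH1 i hi).eq_zero_of_dotProduct_mulVec_self_eq_zero
      ((Finset.sum_eq_zero_iff_of_nonneg fun i _ => hH i).mp (by linarith) i (Finset.mem_univ i))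
  have hX0 : X = 0 := eq_zero_of_assumption1 hAss hH0 hE0
  exact hx (funext fun p => congrFun (congrFun hX0 p.1) p.2)

theorem stmt4_general (N d : ℕ)
    (A : Fin N → Fin N → Matrix (Fin d) (Fin d) ℝ) (hA : SignedWeights A)
    (V1 V2 : Finset (Fin N)) (hAss : Assumption1 A V1 V2)
    (δ : Fin N → ℝ) (hδ0 : ∀ i, 0 ≤ δ i)
    (B : Fin N → Matrix (Fin d) (Fin d) ℝ)
    (hBsd : ∀ i, (B i).PosSemidef ∨ (-(B i)).PosSemidef)
    (hBpd : ∀ i ∈ V1, (absM (B i)).PosDef)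
    (hδC : ∀ i ∈ V1, ∀ μ : ℝ,
      (((absM (B i))⁻¹ * (outDeg A i - inDeg A i)).charpoly).IsRoot μ → μ / 2 < δ i) :
    ∀ μ : ℂ,
      (((Lap A + blockDiag' fun i => δ i • absM (B i)).map
        (Complex.ofReal)).charpoly).IsRoot μ → 0 < μ.re := fun _ =>
  re_pos_of_isRoot_charpoly_map_ofReal fun _ hx =>
    dotProduct_lap_add_blockDiag'_mulVec_pos hA hAss hδ0 hBsd hBpd hδC hx

/-- Theorem 1: positive spectrum of the directed grounded Laplacian.
The bound `δ_i > C_i = ½ λ_max[|B_i|⁻¹(Σ|A_{ji}| − Σ|A_{ij}|)]` is expressed by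
requiring `δ_i > μ/2` for every (real) eigenvalue `μ` of that matrix — all of whose
eigenvalues are real. -/
theorem stmt4 (N d : ℕ) (hN : 1 ≤ N) (hd : 1 ≤ d)
    (A : Fin N → Fin N → Matrix (Fin d) (Fin d) ℝ) (hA : SignedWeights A)
    (V1 V2 : Finset (Fin N)) (hAss : Assumption1 A V1 V2)
    (δ : Fin N → ℝ) (hδ0 : ∀ i, 0 ≤ δ i)
    (B : Fin N → Matrix (Fin d) (Fin d) ℝ)
    (hBsymm : ∀ i, (B i).IsSymm)
    (hBsd : ∀ i, (B i).PosSemidef ∨ (-(B i)).PosSemidef)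
    (hBpd : ∀ i ∈ V1, (absM (B i)).PosDef)
    (hδC : ∀ i ∈ V1, ∀ μ : ℝ,
      (((absM (B i))⁻¹ * (outDeg A i - inDeg A i)).charpoly).IsRoot μ → μ / 2 < δ i) :
    ∀ μ : ℂ,
      (((Lap A + blockDiag' fun i => δ i • absM (B i)).map
        (Complex.ofReal)).charpoly).IsRoot μ → 0 < μ.re :=
  stmt4_general N d A hA V1 V2 hAss δ hδ0 B hBsd hBpd hδC
end

section
/- (Lemma 4: limit of a converging switched linear system lies in the kernels asymptotically.) Let L_1,…,L_M ∈ ℝ^{n×n} be finitely many real matrices, let α > 0, let (t_k)_{k≥0} be a strictly increasing sequence with t_0 = 0, t_{k+1} − t_k ≥ α for all k, and t_k → ∞, and let σ : ℕ → {1,…,M}. Given z_0 ∈ ℝ^n, define z : [0,∞) → ℝ^n by z(t) = exp(−(t − t_k) L_{σ(k)}) · exp(−(t_k − t_{k−1}) L_{σ(k−1)}) ⋯ exp(−(t_1 − t_0) L_{σ(0)}) z_0 for t ∈ [t_k, t_{k+1}). If z(t) → z* ∈ ℝ^n as t → ∞, then L_{σ(k(t))} z* → 0 as t → ∞, where for each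 t ≥ 0, k(t) is the unique index k with t ∈ [t_k, t_{k+1}). -/
/-!
If mode `i` is active on infinitely many dwell intervals, pass to the limit along those `k` in
`z(t_k + s) = exp(-s L_i) z(t_k)`: this gives `exp(-s L_i) z* = z*` for every `s ∈ (0, α)`, and
differentiating in `s` gives `L_i z* = 0`. As there are finitely many modes, from some `k` on
every active mode is of this kind, so `L_{σ(k(t))} z* = 0` for large `t` since `k(t) → ∞`.
-/

open Matrix Filter Topology Function

/-- The product `exp(−Δt_{k−1} L_{σ(k−1)}) ⋯ exp(−Δt_0 L_{σ(0)})` of the flows of the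
switched linear system up to switching instant `t_k` (with `Δt_j = t_{j+1} − t_j`). -/
noncomputable def switchProd {n M : ℕ} (L : Fin M → Matrix (Fin n) (Fin n) ℝ)
    (σ : ℕ → Fin M) (tk : ℕ → ℝ) : ℕ → Matrix (Fin n) (Fin n) ℝ
  | 0 => 1
  | k + 1 => NormedSpace.exp (-((tk (k + 1) - tk k) • L (σ k))) * switchProd L σ tk k

section MatrixExp

attribute [local instance] Matrix.linftyOpNormedAddCommGroup Matrix.linftyOpNormedRing
  Matrix.linftyOpNormedAlgebra

/-- The derivative of `s ↦ exp (s • B) *ᵥ v` at `s₀` is `B *ᵥ (exp (s₀ • B) *ᵥ v) = B *ᵥ v`,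
and it vanishes since the function is locally constant. -/
theorem Matrix.mulVec_eq_zero_of_eventually_exp_smul_mulVec_eq {ι : Type*} [Fintype ι]
    [DecidableEq ι] {B : Matrix ι ι ℝ} {v : ι → ℝ} {s₀ : ℝ}
    (h : ∀ᶠ s in 𝓝 s₀, NormedSpace.exp (s • B) *ᵥ v = v) : B *ᵥ v = 0 := by
  let evalAt : Matrix ι ι ℝ →L[ℝ] (ι → ℝ) :=
    LinearMap.toContinuousLinearMap ((Matrix.mulVecBilin ℝ ℝ).flip v)
  have hderiv : HasDerivAt (fun s : ℝ => NormedSpace.exp (s • B) *ᵥ v)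
      ((B * NormedSpace.exp (s₀ • B)) *ᵥ v) s₀ :=
    evalAt.hasFDerivAt.comp_hasDerivAt s₀ (hasDerivAt_exp_smul_const' B s₀)
  have hconst : HasDerivAt (fun s : ℝ => NormedSpace.exp (s • B) *ᵥ v) 0 s₀ :=
    (hasDerivAt_const s₀ v).congr_of_eventuallyEq h
  rw [← mulVec_mulVec, h.self_of_nhds] at hderiv
  exact hderiv.unique hconst

end MatrixExp

theorem Function.isFixedPt_of_tendsto_of_eventually_map_eq {β E : Type*} {l : Filter β}
    [l.NeBot] [TopologicalSpace E] [T2Space E] {z : ℝ → E} {a : E} {f : E → E}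
    (hz : Tendsto z atTop (𝓝 a)) (hf : Continuous f) {τ : β → ℝ} {s : ℝ}
    (hτ : Tendsto τ l atTop) (hstep : ∀ᶠ m in l, z (τ m + s) = f (z (τ m))) :
    IsFixedPt f a := by
  have hshift : Tendsto (fun m => z (τ m + s)) l (𝓝 a) :=
    hz.comp (tendsto_atTop_add_const_right _ s hτ)
  have hmap : Tendsto (fun m => z (τ m + s)) l (𝓝 (f a)) :=
    ((hf.tendsto a).comp (hz.comp hτ)).congr' (hstep.mono fun _ hm => hm.symm)
  exact tendsto_nhds_unique hmap hshift

theorem Filter.eventually_of_frequently_imp {ι α : Type*} [Finite ι] {l : Filter α}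
    {σ : α → ι} {p : ι → Prop} (h : ∀ i, (∃ᶠ x in l, σ x = i) → p i) :
    ∀ᶠ x in l, p (σ x) := by
  have hmode : ∀ i, ∀ᶠ x in l, σ x = i → p i := fun i => by
    by_cases hi : p i
    · exact .of_forall fun _ _ => hi
    · exact (not_frequently.1 (mt (h i) hi)).mono fun _ hx hxi => absurd hxi hx
  filter_upwards [eventually_all.2 hmode] with x hx using hx (σ x) rfl

section SwitchedSystem

variable {tk : ℕ → ℝ} {K : ℝ → ℕ}

theorem Monotone.tendsto_atTop_of_lt_succ (hmono : Monotone tk)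
    (hK : ∀ᶠ t in atTop, t < tk (K t + 1)) : Tendsto K atTop atTop := by
  refine tendsto_atTop.2 fun N => ?_
  filter_upwards [hK, eventually_ge_atTop (tk N)] with t hlt hge
  by_contra! hKN
  exact (hge.trans_lt hlt).not_ge (hmono (Nat.succ_le_of_lt hKN))

theorem Monotone.eq_of_mem_Ico_succ (hmono : Monotone tk) {j k : ℕ} {t : ℝ}
    (hj : t ∈ Set.Ico (tk j) (tk (j + 1))) (hk : t ∈ Set.Ico (tk k) (tk (k + 1))) : j = k := by
  by_contra hne
  exact Set.disjoint_left.1 (hmono.pairwise_disjoint_on_Ico_succ hne) hj hk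

variable {n M : ℕ} {L : Fin M → Matrix (Fin n) (Fin n) ℝ} {σ : ℕ → Fin M}
  {z₀ : Fin n → ℝ} {z : ℝ → Fin n → ℝ}

theorem switched_eq_exp_mulVec_of_mem_Ico (hmono : Monotone tk)
    (hK : ∀ t : ℝ, 0 ≤ t → tk (K t) ≤ t ∧ t < tk (K t + 1))
    (hz : ∀ t : ℝ, 0 ≤ t →
      z t = (NormedSpace.exp (-((t - tk (K t)) • L (σ (K t)))) *
        switchProd L σ tk (K t)).mulVec z₀)
    {k : ℕ} (hk : 0 ≤ tk k) {s : ℝ} (hs : s ∈ Set.Ico 0 (tk (k + 1) - tk k)) :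
    z (tk k + s) = NormedSpace.exp (-(s • L (σ k))) *ᵥ z (tk k) := by
  have hindex : ∀ t, t ∈ Set.Ico (tk k) (tk (k + 1)) → K t = k := fun t ht =>
    hmono.eq_of_mem_Ico_succ (hK t (hk.trans ht.1)) ht
  have h0 : K (tk k) = k := hindex _ ⟨le_rfl, by linarith [hs.1, hs.2]⟩
  have hs' : K (tk k + s) = k := hindex _ ⟨by linarith [hs.1], by linarith [hs.2]⟩
  rw [hz _ (by linarith [hs.1]), hz _ hk, hs', h0, add_sub_cancel_left, sub_self, zero_smul,
    neg_zero, NormedSpace.exp_zero, one_mul, mulVec_mulVec]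

end SwitchedSystem

theorem stmt11_general (n M : ℕ) (L : Fin M → Matrix (Fin n) (Fin n) ℝ)
    (α : ℝ) (hα : 0 < α)
    (tk : ℕ → ℝ) (hmono : StrictMono tk)
    (hgap : ∀ k, α ≤ tk (k + 1) - tk k) (htop : Tendsto tk atTop atTop)
    (σ : ℕ → Fin M) (z₀ : Fin n → ℝ)
    (K : ℝ → ℕ) (hK : ∀ t : ℝ, 0 ≤ t → tk (K t) ≤ t ∧ t < tk (K t + 1))
    (z : ℝ → Fin n → ℝ)
    (hz : ∀ t : ℝ, 0 ≤ t →
      z t = (NormedSpace.exp (-((t - tk (K t)) • L (σ (K t)))) *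
        switchProd L σ tk (K t)).mulVec z₀)
    (zstar : Fin n → ℝ) (hconv : Tendsto z atTop (nhds zstar)) :
    Tendsto (fun t : ℝ => (L (σ (K t))).mulVec zstar) atTop (nhds 0) := by
  have hKtop : Tendsto K atTop atTop :=
    hmono.monotone.tendsto_atTop_of_lt_succ <|
      (eventually_ge_atTop 0).mono fun t ht => (hK t ht).2
  have hkernel : ∀ i, (∃ᶠ k in atTop, σ k = i) → L i *ᵥ zstar = 0 := by
    intro i hi
    obtain ⟨φ, hφ, hσφ⟩ := extraction_of_frequently_atTop hi
    have hτ : Tendsto (tk ∘ φ) atTop atTop := htop.comp hφ.tendsto_atTop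
    rw [← neg_eq_zero, ← neg_mulVec]
    refine mulVec_eq_zero_of_eventually_exp_smul_mulVec_eq (s₀ := α / 2) ?_
    filter_upwards [Ioo_mem_nhds (half_pos hα) (half_lt_self hα)] with s hs
    refine isFixedPt_of_tendsto_of_eventually_map_eq (s := s) hconv
      (continuous_const.matrix_mulVec continuous_id) hτ ?_
    filter_upwards [hτ.eventually_ge_atTop 0] with m hm
    rw [Function.comp_apply, switched_eq_exp_mulVec_of_mem_Ico hmono.monotone hK hz hm
      ⟨hs.1.le, hs.2.trans_le (hgap _)⟩, hσφ m, smul_neg]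
  exact tendsto_const_nhds.congr'
    ((hKtop.eventually (eventually_of_frequently_imp hkernel)).mono fun _ ht => ht.symm)

/-- Lemma 4: if the converging switched linear system
`z(t) = exp(−(t − t_k)L_{σ(k)}) ⋯ exp(−(t_1 − t_0)L_{σ(0)}) z_0` (for `t ∈ [t_k, t_{k+1})`)
tends to `z*`, then `L_{σ(k(t))} z* → 0` as `t → ∞`. -/
theorem stmt11 (n M : ℕ) (L : Fin M → Matrix (Fin n) (Fin n) ℝ)
    (α : ℝ) (hα : 0 < α)
    (tk : ℕ → ℝ) (htk0 : tk 0 = 0) (hmono : StrictMono tk)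
    (hgap : ∀ k, α ≤ tk (k + 1) - tk k) (htop : Tendsto tk atTop atTop)
    (σ : ℕ → Fin M) (z₀ : Fin n → ℝ)
    (K : ℝ → ℕ) (hK : ∀ t : ℝ, 0 ≤ t → tk (K t) ≤ t ∧ t < tk (K t + 1))
    (z : ℝ → Fin n → ℝ)
    (hz : ∀ t : ℝ, 0 ≤ t →
      z t = (NormedSpace.exp (-((t - tk (K t)) • L (σ (K t)))) *
        switchProd L σ tk (K t)).mulVec z₀)
    (zstar : Fin n → ℝ) (hconv : Tendsto z atTop (nhds zstar)) :
    Tendsto (fun t : ℝ => (L (σ (K t))).mulVec zstar) atTop (nhds 0) :=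
  stmt11_general n M L α hα tk hmono hgap htop σ z₀ K hK z hz zstar hconv
end

section
/- (Theorem 3: necessary condition for convergence under switching.) Let L_1,…,L_M ∈ ℝ^{n×n} be finitely many real matrices, let α > 0, let (t_k)_{k≥0} be strictly increasing with t_0 = 0, t_{k+1} − t_k ≥ α, t_k → ∞, and let σ : ℕ → {1,…,M}. Given z_0 ∈ ℝ^n, define z : [0,∞) → ℝ^n by z(t) = exp(−(t − t_k) L_{σ(k)}) · exp(−(t_k − t_{k−1}) L_{σ(k−1)}) ⋯ exp(−(t_1 − t_0) L_{σ(0)}) z_0 for t ∈ [t_k, t_{k+1}). Suppose z(t) → z* as t → ∞. Then for every index m ∈ {1,…,M} such that σ(k) = m for infinitely many k, one has L_m z* = 0; consequently z* lies in the intersection of the null spaces of all matrices L_m whose index occurs infinitely often in σ. -/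
open Matrix Filter

/-!
Along the infinitely many switching instants `t_k` with `σ k = m`, the system follows the
flow of `L_m` for at least time `α`, so `z (t_k + s) = exp (-s L_m) z (t_k)` for `0 ≤ s < α`.
Letting `k → ∞` gives `exp (-s L_m) z* = z*` for all small `s > 0`, and differentiating at
`s = 0` gives `L_m z* = 0`.
-/

open Set Topology Function NormedSpace

theorem hasDerivAt_exp_smul_mulVec {𝕂 ι : Type*} [RCLike 𝕂] [Fintype ι] [DecidableEq ι]
    (A : Matrix ι ι 𝕂) (v : ι → 𝕂) (t : 𝕂) :
    HasDerivAt (fun s : 𝕂 => exp (s • A) *ᵥ v) ((A * exp (t • A)) *ᵥ v) t := by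
  let := Matrix.linftyOpNormedRing (n := ι) (α := 𝕂)
  let := Matrix.linftyOpNormedAlgebra (n := ι) (α := 𝕂) (R := 𝕂)
  -- completeness has to be stated for the uniform structure of the `linfty` norm just chosen
  have hexp := @hasDerivAt_exp_smul_const' _ _ _ _ _ (FiniteDimensional.complete 𝕂 _) A t
  exact (LinearMap.applyₗ v ∘ₗ Matrix.toLin'.toLinearMap).toContinuousLinearMap.hasFDerivAt
    |>.comp_hasDerivAt t hexp

theorem mulVec_eq_zero_of_exp_smul_mulVec_eq {ι : Type*} [Fintype ι] [DecidableEq ι]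
    (A : Matrix ι ι ℝ) (v : ι → ℝ) {ε : ℝ} (hε : 0 < ε)
    (h : ∀ s ∈ Ioo 0 ε, exp (s • A) *ᵥ v = v) : A *ᵥ v = 0 := by
  have hderiv : HasDerivWithinAt (fun s : ℝ => exp (s • A) *ᵥ v) (A *ᵥ v) (Ioi 0) 0 := by
    simpa using (hasDerivAt_exp_smul_mulVec A v 0).hasDerivWithinAt
  have hconst : HasDerivWithinAt (fun s : ℝ => exp (s • A) *ᵥ v) 0 (Ioi 0) 0 :=
    (hasDerivWithinAt_const 0 _ v).congr_of_eventuallyEq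
      (eventually_of_mem (Ioo_mem_nhdsGT hε) h) (by simp)
  exact (uniqueDiffWithinAt_Ioi 0).eq_deriv _ hderiv hconst

theorem isFixedPt_of_tendsto_of_frequently_eq {α X : Type*} [TopologicalSpace X] [T2Space X]
    {l : Filter α} {z : α → X} {x : X} (hz : Tendsto z l (𝓝 x)) {t u : ℕ → α}
    (ht : Tendsto t atTop l) (hu : Tendsto u atTop l) {f : X → X} (hf : Continuous f)
    (h : ∃ᶠ k in atTop, z (u k) = f (z (t k))) : IsFixedPt f x :=
  tendsto_nhds_unique_of_frequently_eq ((hf.tendsto x).comp (hz.comp ht)) (hz.comp hu)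
    (h.mono fun _ hk => hk.symm)

theorem Monotone.eq_of_mem_Ico_succ_s12 {β : Type*} [Preorder β] {f : ℕ → β} (hf : Monotone f)
    {j k : ℕ} {b : β} (hj : b ∈ Ico (f j) (f (j + 1))) (hk : b ∈ Ico (f k) (f (k + 1))) :
    j = k := by
  by_contra hjk
  exact disjoint_left.mp (hf.pairwise_disjoint_on_Ico_succ hjk) hj hk

theorem switched_solution_shift {n M : ℕ} {L : Fin M → Matrix (Fin n) (Fin n) ℝ} {σ : ℕ → Fin M}
    {tk : ℕ → ℝ} {z₀ : Fin n → ℝ} {K : ℝ → ℕ} {z : ℝ → Fin n → ℝ}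
    (htk0 : tk 0 = 0) (hmono : Monotone tk)
    (hK : ∀ t : ℝ, 0 ≤ t → tk (K t) ≤ t ∧ t < tk (K t + 1))
    (hz : ∀ t : ℝ, 0 ≤ t →
      z t = (exp (-((t - tk (K t)) • L (σ (K t)))) * switchProd L σ tk (K t)) *ᵥ z₀)
    (k : ℕ) {s : ℝ} (hs : s ∈ Ico 0 (tk (k + 1) - tk k)) :
    z (tk k + s) = exp (-(s • L (σ k))) *ᵥ z (tk k) := by
  have hnonneg : 0 ≤ tk k := htk0 ▸ hmono k.zero_le
  have hK_eq : ∀ t ∈ Ico (tk k) (tk (k + 1)), K t = k := fun t ht =>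
    hmono.eq_of_mem_Ico_succ_s12 (hK t (hnonneg.trans ht.1)) ht
  have hKk : K (tk k) = k := hK_eq _ ⟨le_rfl, by linarith [hs.1, hs.2]⟩
  have hKks : K (tk k + s) = k := hK_eq _ ⟨by linarith [hs.1], by linarith [hs.2]⟩
  rw [hz _ hnonneg, hz _ (by linarith [hs.1]), hKk, hKks, mulVec_mulVec]
  simp

/-- Theorem 3: necessary condition for convergence under switching:
if the switched solution converges to `z*`, then `L_m z* = 0` for every index `m`
occurring infinitely often in `σ`; hence `z*` lies in the intersection of the null
spaces of all such `L_m`. -/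
theorem stmt12 (n M : ℕ) (L : Fin M → Matrix (Fin n) (Fin n) ℝ)
    (α : ℝ) (hα : 0 < α)
    (tk : ℕ → ℝ) (htk0 : tk 0 = 0) (hmono : StrictMono tk)
    (hgap : ∀ k, α ≤ tk (k + 1) - tk k) (htop : Tendsto tk atTop atTop)
    (σ : ℕ → Fin M) (z₀ : Fin n → ℝ)
    (K : ℝ → ℕ) (hK : ∀ t : ℝ, 0 ≤ t → tk (K t) ≤ t ∧ t < tk (K t + 1))
    (z : ℝ → Fin n → ℝ)
    (hz : ∀ t : ℝ, 0 ≤ t →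
      z t = (NormedSpace.exp (-((t - tk (K t)) • L (σ (K t)))) *
        switchProd L σ tk (K t)).mulVec z₀)
    (zstar : Fin n → ℝ) (hconv : Tendsto z atTop (nhds zstar)) :
    (∀ m : Fin M, {k : ℕ | σ k = m}.Infinite → (L m).mulVec zstar = 0) ∧
    zstar ∈ ⋂ m ∈ {m : Fin M | {k : ℕ | σ k = m}.Infinite},
      {v : Fin n → ℝ | (L m).mulVec v = 0} := by
  have hnull : ∀ m : Fin M, {k : ℕ | σ k = m}.Infinite → L m *ᵥ zstar = 0 := by
    intro m hm
    have hfix : ∀ s ∈ Ioo 0 α, exp (s • -L m) *ᵥ zstar = zstar := fun s hs =>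
      isFixedPt_of_tendsto_of_frequently_eq hconv htop (tendsto_atTop_add_const_right _ s htop)
        (Continuous.matrix_mulVec continuous_const continuous_id) <|
        (Nat.frequently_atTop_iff_infinite.mpr hm).mono fun k (hk : σ k = m) => by
          rw [switched_solution_shift htk0 hmono.monotone hK hz k
            ⟨hs.1.le, hs.2.trans_le (hgap k)⟩, hk, smul_neg]
    simpa [neg_mulVec] using mulVec_eq_zero_of_exp_smul_mulVec_eq (-L m) zstar hα hfix
  exact ⟨hnull, by simpa using hnull⟩
end
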